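/- Let f : ℝ² → ℝ and u : ℝ² → ℝ be twice continuously differentiable on a neighborhood of a point p ∈ ℝ², and suppose f_x(p) = f_y(p) = 0. Then the divergence form of the Laplace–Beltrami operator, (1/√|g|)[∂_x̂(√|g|(g^{11} u_x + g^{12} u_y)) + ∂_ŷ(√|g|(g^{21} u_x + g^{22} u_y))], evaluated at p, equals u_{x̂x̂}(p) + u_{ŷŷ}(p). That is, at a point where the tangent plane is horizontal, the local-coordinate formulation of the surface Laplacian reduces to the tangent plane formulation ∂_{x̂x̂} + ∂_{ŷŷ}. -/

import Mathlib

/-- Partial derivative with respect to the first coordinate. -/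
noncomputable def pdx (g : ℝ × ℝ → ℝ) (z : ℝ × ℝ) : ℝ := fderiv ℝ g z (1, 0)

/-- Partial derivative with respect to the second coordinate. -/
noncomputable def pdy (g : ℝ × ℝ → ℝ) (z : ℝ × ℝ) : ℝ := fderiv ℝ g z (0, 1)

/-- The Monge-patch metric tensor `G(z)`. -/
noncomputable def Gm (f : ℝ × ℝ → ℝ) (z : ℝ × ℝ) : Matrix (Fin 2) (Fin 2) ℝ :=
  !![1 + pdx f z ^ 2, pdx f z * pdy f z; pdx f z * pdy f z, 1 + pdy f z ^ 2]

/-- Square root of the metric determinant `√|g| = √(1 + f_x² + f_y²)`. -/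
noncomputable def sqrtg (f : ℝ × ℝ → ℝ) (z : ℝ × ℝ) : ℝ :=
  Real.sqrt (1 + pdx f z ^ 2 + pdy f z ^ 2)

/-! With `D = 1 + f_x² + f_y²` we have `G⁻¹ = adj G / D` and `√|g| = √D`, so the first flux is
`((1 + f_y²) u_x - f_x f_y u_y) / √D`, and symmetrically for the second. At a point where
`f_x = f_y = 0`, every term involving `f_x` or `f_y` is a product of two functions vanishing there,
hence has zero derivative. So `√D` has value `1` and derivative `0` at `p`, the numerator has the
derivative of `u_x`, and the fluxes differentiate to `u_xx` and `u_yy`. -/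

section Calculus

variable {E : Type*} [NormedAddCommGroup E] [NormedSpace ℝ E] {φ ψ : E → ℝ} {p : E}
  {φ' ψ' : E →L[ℝ] ℝ}

theorem hasFDerivAt_mul_of_eq_zero (hφ : HasFDerivAt φ φ' p) (hψ : HasFDerivAt ψ ψ' p)
    (hφ0 : φ p = 0) (hψ0 : ψ p = 0) :
    HasFDerivAt (fun w => φ w * ψ w) (0 : E →L[ℝ] ℝ) p :=
  (hφ.fun_mul hψ).congr_fderiv (by simp [hφ0, hψ0])

theorem hasFDerivAt_sqrt_one_add_sq_add_sq (hφ : HasFDerivAt φ φ' p) (hψ : HasFDerivAt ψ ψ' p)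
    (hφ0 : φ p = 0) (hψ0 : ψ p = 0) :
    HasFDerivAt (fun w => √(1 + φ w ^ 2 + ψ w ^ 2)) (0 : E →L[ℝ] ℝ) p := by
  have hsum : HasFDerivAt (fun w => 1 + φ w ^ 2 + ψ w ^ 2) (0 : E →L[ℝ] ℝ) p := by
    simpa only [sq, add_zero] using
      ((hasFDerivAt_mul_of_eq_zero hφ hφ hφ0 hφ0).const_add 1).fun_add
        (hasFDerivAt_mul_of_eq_zero hψ hψ hψ0 hψ0)
  simpa using hsum.sqrt (by simp [hφ0, hψ0])

theorem hasFDerivAt_one_add_sq_mul_sub_mul_mul {a b : E → ℝ} {a' : E →L[ℝ] ℝ}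
    (hφ : HasFDerivAt φ φ' p) (hψ : HasFDerivAt ψ ψ' p) (ha : HasFDerivAt a a' p)
    (hb : DifferentiableAt ℝ b p) (hφ0 : φ p = 0) (hψ0 : ψ p = 0) :
    HasFDerivAt (fun w => (1 + ψ w ^ 2) * a w - φ w * ψ w * b w) a' p := by
  have hψψ := hasFDerivAt_mul_of_eq_zero hψ hψ hψ0 hψ0
  have hφψ := hasFDerivAt_mul_of_eq_zero hφ hψ hφ0 hψ0
  simp only [sq]
  exact ((hψψ.const_add 1).fun_mul ha |>.fun_sub (hφψ.fun_mul hb.hasFDerivAt)).congr_fderiv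
    (by simp [hφ0, hψ0])

theorem HasFDerivAt.div_of_hasFDerivAt_zero_of_eq_one {N s : E → ℝ} {N' : E →L[ℝ] ℝ}
    (hN : HasFDerivAt N N' p) (hs : HasFDerivAt s (0 : E →L[ℝ] ℝ) p) (hs1 : s p = 1) :
    HasFDerivAt (fun w => N w / s w) N' p := by
  have hinv := (hasDerivAt_inv (by simp [hs1])).comp_hasFDerivAt p hs
  simp only [div_eq_mul_inv]
  exact (hN.fun_mul hinv).congr_fderiv (by simp [hs1])

theorem differentiableAt_fderiv_apply {F : Type*} [NormedAddCommGroup F] [NormedSpace ℝ F]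
    {g : E → F} (hg : ContDiffAt ℝ 2 g p) (v : E) :
    DifferentiableAt ℝ (fun z => fderiv ℝ g z v) p :=
  ((hg.fderiv_right (by norm_num)).differentiableAt one_ne_zero).clm_apply
    (differentiableAt_const v)

end Calculus

theorem Gm_inv (f : ℝ × ℝ → ℝ) (w : ℝ × ℝ) :
    (Gm f w)⁻¹ = (1 + pdx f w ^ 2 + pdy f w ^ 2)⁻¹ •
      !![1 + pdy f w ^ 2, -(pdx f w * pdy f w); -(pdx f w * pdy f w), 1 + pdx f w ^ 2] := by
  rw [Gm, Matrix.inv_def, Matrix.adjugate_fin_two_of, Matrix.det_fin_two_of, Ring.inverse_eq_inv']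
  congr 1
  ring

theorem sqrtg_mul_Gm_inv_row_zero (f : ℝ × ℝ → ℝ) (w : ℝ × ℝ) (a b : ℝ) :
    sqrtg f w * ((Gm f w)⁻¹ 0 0 * a + (Gm f w)⁻¹ 0 1 * b) =
      ((1 + pdy f w ^ 2) * a - pdx f w * pdy f w * b) / sqrtg f w := by
  rw [Gm_inv, sqrtg, div_eq_mul_inv, ← Real.sqrt_div_self]
  simp only [Matrix.smul_apply, Matrix.of_apply, Matrix.cons_val', Matrix.cons_val_zero,
    Matrix.cons_val_fin_one, Matrix.cons_val_one, smul_eq_mul]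
  ring

theorem sqrtg_mul_Gm_inv_row_one (f : ℝ × ℝ → ℝ) (w : ℝ × ℝ) (a b : ℝ) :
    sqrtg f w * ((Gm f w)⁻¹ 1 0 * a + (Gm f w)⁻¹ 1 1 * b) =
      ((1 + pdx f w ^ 2) * b - pdy f w * pdx f w * a) / sqrtg f w := by
  rw [Gm_inv, sqrtg, div_eq_mul_inv, ← Real.sqrt_div_self]
  simp only [Matrix.smul_apply, Matrix.of_apply, Matrix.cons_val', Matrix.cons_val_zero,
    Matrix.cons_val_fin_one, Matrix.cons_val_one, smul_eq_mul]
  ring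

theorem laplace_beltrami_tangent_plane (f u : ℝ × ℝ → ℝ) (p : ℝ × ℝ)
    (hf : ContDiffAt ℝ 2 f p) (hu : ContDiffAt ℝ 2 u p)
    (hfx : pdx f p = 0) (hfy : pdy f p = 0) :
    (1 / sqrtg f p) *
      (pdx (fun w => sqrtg f w *
          ((Gm f w)⁻¹ 0 0 * pdx u w + (Gm f w)⁻¹ 0 1 * pdy u w)) p
        + pdy (fun w => sqrtg f w *
          ((Gm f w)⁻¹ 1 0 * pdx u w + (Gm f w)⁻¹ 1 1 * pdy u w)) p)
    = pdx (pdx u) p + pdy (pdy u) p := by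
  have hfx' : HasFDerivAt (pdx f) _ p := (differentiableAt_fderiv_apply hf (1, 0)).hasFDerivAt
  have hfy' : HasFDerivAt (pdy f) _ p := (differentiableAt_fderiv_apply hf (0, 1)).hasFDerivAt
  have hux : DifferentiableAt ℝ (pdx u) p := differentiableAt_fderiv_apply hu (1, 0)
  have huy : DifferentiableAt ℝ (pdy u) p := differentiableAt_fderiv_apply hu (0, 1)
  have hsqrtg : HasFDerivAt (sqrtg f) 0 p :=
    hasFDerivAt_sqrt_one_add_sq_add_sq hfx' hfy' hfx hfy
  have hsqrtg1 : sqrtg f p = 1 := by simp [sqrtg, hfx, hfy]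
  have hflux_x := (hasFDerivAt_one_add_sq_mul_sub_mul_mul hfx' hfy' hux.hasFDerivAt huy hfx
    hfy).div_of_hasFDerivAt_zero_of_eq_one hsqrtg hsqrtg1
  have hflux_y := (hasFDerivAt_one_add_sq_mul_sub_mul_mul hfy' hfx' huy.hasFDerivAt hux hfy
    hfx).div_of_hasFDerivAt_zero_of_eq_one hsqrtg hsqrtg1
  simp only [sqrtg_mul_Gm_inv_row_zero, sqrtg_mul_Gm_inv_row_one, hsqrtg1]
  rw [pdx, pdy, hflux_x.fderiv, hflux_y.fderiv]
  simp [pdx, pdy]
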